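/- arXiv:quant-ph/0609040 — 4 statements merged into one kernel-verified Lean document; each statement's English description precedes it below -/
import Mathlib

section
/- Let H be a complex Hilbert space, γ > 0, σ ∈ ℝ and κ := γ/2 + iσ. Let E₀₀, E₁₁, E₁₀ be bounded operators on H with E₀₀ and E₁₁ self-adjoint, and set E₀₁ := E₁₀†. Assume T := 1 + iκE₁₁ is invertible in the algebra of bounded operators, and define L₁₁ := −iE₁₁T⁻¹, L₁₀ := −iT⁻¹E₁₀, L₀₁ := −iE₀₁T⁻¹, L₀₀ := −iE₀₀ − κE₀₁T⁻¹E₁₀. Then the Hudson–Parthasarathy unitarity (isometry) relations hold: L₀₀ + L₀₀† + γL₁₀†L₁₀ = 0, L₀₁ + L₁₀† + γL₁₀†L₁₁ = 0, L₁₀ + L₀₁† + γL₁₁†L₁₀ = 0, and L₁₁ + L₁₁† + γL₁₁†L₁₁ = 0. -/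
/-!
With `S = T⁻¹`, the four left-hand sides factor as `E₁₀† M E₁₀`, `E₁₀† N`, `N E₁₀` and `N E₁₁`,
where `M = -κ S - κ̄ S† + γ S† S` and `N = -i S + i S† + γ S† E₁₁ S` (the last factorisation
because `E₁₁` commutes with `T`, hence with `S`). Sandwiching between `T†` and `T` turns `M` and
`N` into the linear expressions `-κ T† - κ̄ T + γ` and `-i T† + i T + γ E₁₁`, which vanish for
`T = 1 + iκ E₁₁` exactly because `κ + κ̄ = γ`.
-/

open Complex ComplexConjugate

theorem Commute.ringInverse_right {M₀ : Type*} [MonoidWithZero M₀] {a b : M₀}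
    (h : Commute a b) : Commute a (Ring.inverse b) := by
  by_cases hb : IsUnit b
  · obtain ⟨u, rfl⟩ := hb
    rw [Ring.inverse_unit]
    exact h.units_inv_right
  · rw [Ring.inverse_non_unit b hb]
    exact Commute.zero_right a

section StarAlgebra

variable {A : Type*} [Ring A] [StarRing A] [Algebra ℂ A]

theorem smul_ringInverse_add_smul_star_add_smul_eq_zero_iff {T : A} (hT : IsUnit T)
    (a b c : ℂ) (Y : A) :
    a • Ring.inverse T + b • star (Ring.inverse T)
        + c • (star (Ring.inverse T) * Y * Ring.inverse T) = 0 ↔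
      a • star T + b • T + c • Y = 0 := by
  set S := Ring.inverse T
  have hST : S * T = 1 := Ring.inverse_mul_cancel T hT
  have hTS : star T * star S = 1 := by rw [← star_mul, hST, star_one]
  rw [← hT.mul_left_eq_zero, ← hT.star.mul_right_eq_zero]
  congr! 1
  simp only [mul_add, add_mul, mul_smul_comm, smul_mul_assoc, mul_assoc, hST, mul_one]
  simp only [← mul_assoc, hTS, one_mul]

variable [StarModule ℂ A]

theorem ringInverse_relation_imaginary {E : A} (hE : IsSelfAdjoint E) {κ γ : ℂ}
    (hκ : κ + conj κ = γ) {T : A} (hT : IsUnit T) (hTE : T = 1 + (I * κ) • E) :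
    (-I) • Ring.inverse T + I • star (Ring.inverse T)
      + γ • (star (Ring.inverse T) * E * Ring.inverse T) = 0 := by
  rw [smul_ringInverse_add_smul_star_add_smul_eq_zero_iff hT, hTE]
  simp only [star_add, star_one, star_smul, hE.star_eq, star_mul', Complex.star_def, conj_I]
  match_scalars
  · ring
  · linear_combination (κ + conj κ) * I_sq - hκ

theorem ringInverse_relation_real {E : A} (hE : IsSelfAdjoint E) {κ γ : ℂ}
    (hκ : κ + conj κ = γ) {T : A} (hT : IsUnit T) (hTE : T = 1 + (I * κ) • E) :
    (-κ) • Ring.inverse T + (-conj κ) • star (Ring.inverse T)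
      + γ • (star (Ring.inverse T) * Ring.inverse T) = 0 := by
  rw [show star (Ring.inverse T) * Ring.inverse T = star (Ring.inverse T) * 1 * Ring.inverse T by
    rw [mul_one], smul_ringInverse_add_smul_star_add_smul_eq_zero_iff hT, hTE]
  simp only [star_add, star_one, star_smul, hE.star_eq, star_mul', Complex.star_def, conj_I]
  match_scalars
  · linear_combination -hκ
  · ring

variable {S E E₁₀ L₀₁ L₁₀ L₁₁ : A} {γ : ℂ}

theorem isometry_relation_zero_zero {E₀₀ L₀₀ : A} (hE₀₀ : IsSelfAdjoint E₀₀) {κ : ℂ}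
    (hL₀₀ : L₀₀ = (-I) • E₀₀ - κ • (star E₁₀ * S * E₁₀)) (hL₁₀ : L₁₀ = (-I) • (S * E₁₀))
    (hS : (-κ) • S + (-conj κ) • star S + γ • (star S * S) = 0) :
    L₀₀ + star L₀₀ + γ • (star L₁₀ * L₁₀) = 0 := by
  calc L₀₀ + star L₀₀ + γ • (star L₁₀ * L₁₀)
      = star E₁₀ * ((-κ) • S + (-conj κ) • star S + γ • (star S * S)) * E₁₀ := by
        subst hL₀₀ hL₁₀
        simp only [star_sub, star_smul, star_mul, star_star, hE₀₀.star_eq, Complex.star_def,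
          map_neg, conj_I, mul_add, add_mul, smul_mul_assoc, mul_smul_comm, smul_smul, mul_assoc,
          neg_mul, I_mul_I, neg_neg, one_smul]
        match_scalars <;> ring
    _ = 0 := by rw [hS, mul_zero, zero_mul]

theorem isometry_relation_zero_one (hL₀₁ : L₀₁ = (-I) • (star E₁₀ * S))
    (hL₁₀ : L₁₀ = (-I) • (S * E₁₀)) (hL₁₁ : L₁₁ = (-I) • (E * S))
    (hS : (-I) • S + I • star S + γ • (star S * E * S) = 0) :
    L₀₁ + star L₁₀ + γ • (star L₁₀ * L₁₁) = 0 := by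
  calc L₀₁ + star L₁₀ + γ • (star L₁₀ * L₁₁)
      = star E₁₀ * ((-I) • S + I • star S + γ • (star S * E * S)) := by
        subst hL₀₁ hL₁₀ hL₁₁
        simp only [star_smul, star_mul, Complex.star_def, map_neg, conj_I, mul_add,
          smul_mul_assoc, mul_smul_comm, smul_smul, mul_assoc, neg_mul, I_mul_I, neg_neg, one_smul]
    _ = 0 := by rw [hS, mul_zero]

theorem isometry_relation_one_zero (hE : IsSelfAdjoint E) (hL₀₁ : L₀₁ = (-I) • (star E₁₀ * S))
    (hL₁₀ : L₁₀ = (-I) • (S * E₁₀)) (hL₁₁ : L₁₁ = (-I) • (E * S))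
    (hS : (-I) • S + I • star S + γ • (star S * E * S) = 0) :
    L₁₀ + star L₀₁ + γ • (star L₁₁ * L₁₀) = 0 := by
  calc L₁₀ + star L₀₁ + γ • (star L₁₁ * L₁₀)
      = ((-I) • S + I • star S + γ • (star S * E * S)) * E₁₀ := by
        subst hL₀₁ hL₁₀ hL₁₁
        simp only [star_smul, star_mul, star_star, hE.star_eq, Complex.star_def, map_neg, conj_I,
          add_mul, smul_mul_assoc, mul_smul_comm, smul_smul, mul_assoc, neg_mul, I_mul_I, neg_neg,
          one_smul]
    _ = 0 := by rw [hS, zero_mul]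

theorem isometry_relation_one_one (hE : IsSelfAdjoint E) (hES : Commute E S)
    (hL₁₁ : L₁₁ = (-I) • (E * S)) (hS : (-I) • S + I • star S + γ • (star S * E * S) = 0) :
    L₁₁ + star L₁₁ + γ • (star L₁₁ * L₁₁) = 0 := by
  calc L₁₁ + star L₁₁ + γ • (star L₁₁ * L₁₁)
      = ((-I) • S + I • star S + γ • (star S * E * S)) * E := by
        subst hL₁₁
        simp only [star_smul, star_mul, hE.star_eq, Complex.star_def, map_neg, conj_I,
          add_mul, smul_mul_assoc, mul_smul_comm, smul_smul, mul_assoc, neg_mul, I_mul_I, neg_neg,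
          one_smul]
        rw [hES.eq]
    _ = 0 := by rw [hS, zero_mul]

end StarAlgebra

theorem timeOrdered_to_normalOrdered_coefficients_satisfy_isometry_relations_general
    {H : Type*} [NormedAddCommGroup H] [InnerProductSpace ℂ H] [CompleteSpace H]
    (γ σ : ℝ) (κ : ℂ) (hκ : κ = γ / 2 + Complex.I * σ)
    (E₀₀ E₁₁ E₁₀ : H →L[ℂ] H)
    (hE₀₀ : ContinuousLinearMap.adjoint E₀₀ = E₀₀)
    (hE₁₁ : ContinuousLinearMap.adjoint E₁₁ = E₁₁)
    (E₀₁ : H →L[ℂ] H) (hE₀₁ : E₀₁ = ContinuousLinearMap.adjoint E₁₀)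
    (T : H →L[ℂ] H) (hT : T = 1 + (Complex.I * κ) • E₁₁) (hTinv : IsUnit T)
    (L₀₀ L₀₁ L₁₀ L₁₁ : H →L[ℂ] H)
    (hL₁₁ : L₁₁ = (-Complex.I) • (E₁₁ * Ring.inverse T))
    (hL₁₀ : L₁₀ = (-Complex.I) • (Ring.inverse T * E₁₀))
    (hL₀₁ : L₀₁ = (-Complex.I) • (E₀₁ * Ring.inverse T))
    (hL₀₀ : L₀₀ = (-Complex.I) • E₀₀ - κ • (E₀₁ * Ring.inverse T * E₁₀)) :
    L₀₀ + ContinuousLinearMap.adjoint L₀₀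
        + (γ : ℂ) • (ContinuousLinearMap.adjoint L₁₀ * L₁₀) = 0 ∧
    L₀₁ + ContinuousLinearMap.adjoint L₁₀
        + (γ : ℂ) • (ContinuousLinearMap.adjoint L₁₀ * L₁₁) = 0 ∧
    L₁₀ + ContinuousLinearMap.adjoint L₀₁
        + (γ : ℂ) • (ContinuousLinearMap.adjoint L₁₁ * L₁₀) = 0 ∧
    L₁₁ + ContinuousLinearMap.adjoint L₁₁
        + (γ : ℂ) • (ContinuousLinearMap.adjoint L₁₁ * L₁₁) = 0 := by
  simp only [← ContinuousLinearMap.star_eq_adjoint] at hE₀₀ hE₁₁ hE₀₁ ⊢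
  subst hE₀₁
  have hκγ : κ + conj κ = γ := by
    rw [add_conj, hκ]
    simp only [add_re, div_ofNat_re, ofReal_re, mul_re, I_re, I_im, ofReal_im]
    push_cast
    ring
  have hE₁₁T : Commute E₁₁ (Ring.inverse T) := by
    refine Commute.ringInverse_right ?_
    rw [hT]
    exact (Commute.one_right E₁₁).add_right ((Commute.refl E₁₁).smul_right _)
  have hreal := ringInverse_relation_real hE₁₁ hκγ hTinv hT
  have himag := ringInverse_relation_imaginary hE₁₁ hκγ hTinv hT
  exact ⟨isometry_relation_zero_zero hE₀₀ hL₀₀ hL₁₀ hreal,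
    isometry_relation_zero_one hL₀₁ hL₁₀ hL₁₁ himag,
    isometry_relation_one_zero hE₁₁ hL₀₁ hL₁₀ hL₁₁ himag,
    isometry_relation_one_one hE₁₁ hE₁₁T hL₁₁ himag⟩

/-- (Paper, Theorem 1.) Let `H` be a complex Hilbert space, `γ > 0`,
`σ ∈ ℝ` and `κ := γ/2 + iσ`.  Let `E₀₀, E₁₁, E₁₀` be bounded operators on `H` with
`E₀₀`, `E₁₁` self-adjoint, set `E₀₁ := E₁₀†`, assume `T := 1 + iκ E₁₁` is invertible and
define `L₁₁ := -i E₁₁ T⁻¹`, `L₁₀ := -i T⁻¹ E₁₀`, `L₀₁ := -i E₀₁ T⁻¹`,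
`L₀₀ := -i E₀₀ - κ E₀₁ T⁻¹ E₁₀`.  Then the Hudson–Parthasarathy isometry relations
`L_ij + L_ji† + γ L_1i† L_1j = 0` hold. -/
theorem timeOrdered_to_normalOrdered_coefficients_satisfy_isometry_relations
    {H : Type*} [NormedAddCommGroup H] [InnerProductSpace ℂ H] [CompleteSpace H]
    (γ σ : ℝ) (hγ : 0 < γ) (κ : ℂ) (hκ : κ = γ / 2 + Complex.I * σ)
    (E₀₀ E₁₁ E₁₀ : H →L[ℂ] H)
    (hE₀₀ : ContinuousLinearMap.adjoint E₀₀ = E₀₀)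
    (hE₁₁ : ContinuousLinearMap.adjoint E₁₁ = E₁₁)
    (E₀₁ : H →L[ℂ] H) (hE₀₁ : E₀₁ = ContinuousLinearMap.adjoint E₁₀)
    (T : H →L[ℂ] H) (hT : T = 1 + (Complex.I * κ) • E₁₁) (hTinv : IsUnit T)
    (L₀₀ L₀₁ L₁₀ L₁₁ : H →L[ℂ] H)
    (hL₁₁ : L₁₁ = (-Complex.I) • (E₁₁ * Ring.inverse T))
    (hL₁₀ : L₁₀ = (-Complex.I) • (Ring.inverse T * E₁₀))
    (hL₀₁ : L₀₁ = (-Complex.I) • (E₀₁ * Ring.inverse T))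
    (hL₀₀ : L₀₀ = (-Complex.I) • E₀₀ - κ • (E₀₁ * Ring.inverse T * E₁₀)) :
    L₀₀ + ContinuousLinearMap.adjoint L₀₀
        + (γ : ℂ) • (ContinuousLinearMap.adjoint L₁₀ * L₁₀) = 0 ∧
    L₀₁ + ContinuousLinearMap.adjoint L₁₀
        + (γ : ℂ) • (ContinuousLinearMap.adjoint L₁₀ * L₁₁) = 0 ∧
    L₁₀ + ContinuousLinearMap.adjoint L₀₁
        + (γ : ℂ) • (ContinuousLinearMap.adjoint L₁₁ * L₁₀) = 0 ∧
    L₁₁ + ContinuousLinearMap.adjoint L₁₁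
        + (γ : ℂ) • (ContinuousLinearMap.adjoint L₁₁ * L₁₁) = 0 :=
  timeOrdered_to_normalOrdered_coefficients_satisfy_isometry_relations_general γ σ κ hκ E₀₀ E₁₁ E₁₀
    hE₀₀ hE₁₁ E₀₁ hE₀₁ T hT hTinv L₀₀ L₀₁ L₁₀ L₁₁ hL₁₁ hL₁₀ hL₀₁ hL₀₀
end

section
/- Let H be a complex Hilbert space, γ > 0, and let L₀₀, L₀₁, L₁₀, L₁₁ be bounded operators satisfying the isometry relations L₀₀ + L₀₀† + γL₁₀†L₁₀ = 0, L₀₁ + L₁₀† + γL₁₀†L₁₁ = 0, L₁₀ + L₀₁† + γL₁₁†L₁₀ = 0, L₁₁ + L₁₁† + γL₁₁†L₁₁ = 0, and additionally satisfying (1 + γL₁₁)(1 + γL₁₁)† = 1. Then W := 1 + γL₁₁ is unitary (W†W = 1 = WW†), the operator H₀ := i(L₀₀ + (γ/2)L₁₀†L₁₀) is self-adjoint, and one has L₀₁ = −L₁₀†W and L₀₀ = −(γ/2)L₁₀†L₁₀ − iH₀. -/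
/-!
Expanding `W†W = 1 + γ (L₁₁ + L₁₁† + γ L₁₁†L₁₁)` shows that the `(1,1)` relation says exactly
that `W` is an isometry. The `(0,0)` relation says that `L₀₀ + (γ/2) L₁₀†L₁₀` is skew-adjoint,
so `H₀`, which is `i` times it, is self-adjoint. The rest is rearranging the `(0,1)` relation.
-/

theorem star_one_add_smul_mul_one_add_smul_eq_one {R A : Type*} [CommSemiring R] [StarRing R]
    [Ring A] [StarRing A] [Algebra R A] [StarModule R A] {c : R} (hc : IsSelfAdjoint c) {K : A}
    (hK : K + star K + c • (star K * K) = 0) :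
    star (1 + c • K) * (1 + c • K) = 1 := by
  calc star (1 + c • K) * (1 + c • K) = 1 + c • (K + star K + c • (star K * K)) := by
        simp only [star_add, star_one, star_smul, hc.star_eq, add_mul, mul_add, one_mul, mul_one,
          smul_mul_assoc, mul_smul_comm, smul_add, smul_smul]
        abel
    _ = 1 := by rw [hK, smul_zero, add_zero]

theorem add_half_smul_mem_skewAdjoint {R A : Type*} [Field R] [CharZero R] [StarRing R]
    [AddCommGroup A] [StarAddMonoid A] [Module R A] [StarModule R A] {c : R}
    (hc : IsSelfAdjoint c) {X T : A} (hT : IsSelfAdjoint T) (h : X + star X + c • T = 0) :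
    X + (c / 2) • T ∈ skewAdjoint A := by
  have hc2 : star (c / 2) = c / 2 := by rw [star_div₀, hc.star_eq, star_ofNat]
  rw [skewAdjoint.mem_iff, star_add, star_smul, hc2, hT.star_eq]
  linear_combination (norm := module) h

theorem isometry_relations_imply_HP_parametrization_general
    {H : Type*} [NormedAddCommGroup H] [InnerProductSpace ℂ H] [CompleteSpace H]
    (γ : ℝ)
    (L₀₀ L₀₁ L₁₀ L₁₁ : H →L[ℂ] H)
    (h₀₀ : L₀₀ + ContinuousLinearMap.adjoint L₀₀
        + (γ : ℂ) • (ContinuousLinearMap.adjoint L₁₀ * L₁₀) = 0)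
    (h₀₁ : L₀₁ + ContinuousLinearMap.adjoint L₁₀
        + (γ : ℂ) • (ContinuousLinearMap.adjoint L₁₀ * L₁₁) = 0)
    (h₁₁ : L₁₁ + ContinuousLinearMap.adjoint L₁₁
        + (γ : ℂ) • (ContinuousLinearMap.adjoint L₁₁ * L₁₁) = 0)
    (W : H →L[ℂ] H) (hW : W = 1 + (γ : ℂ) • L₁₁)
    (hWco : W * ContinuousLinearMap.adjoint W = 1)
    (H₀ : H →L[ℂ] H)
    (hH₀ : H₀ = Complex.I •
        (L₀₀ + ((γ : ℂ) / 2) • (ContinuousLinearMap.adjoint L₁₀ * L₁₀))) :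
    (ContinuousLinearMap.adjoint W * W = 1 ∧ W * ContinuousLinearMap.adjoint W = 1) ∧
    ContinuousLinearMap.adjoint H₀ = H₀ ∧
    L₀₁ = -(ContinuousLinearMap.adjoint L₁₀ * W) ∧
    L₀₀ = -(((γ : ℂ) / 2) • (ContinuousLinearMap.adjoint L₁₀ * L₁₀))
        - Complex.I • H₀ := by
  simp only [← ContinuousLinearMap.star_eq_adjoint] at *
  subst hW hH₀
  have hγ : IsSelfAdjoint (γ : ℂ) := Complex.conj_ofReal γ
  have hH₀_skew := add_half_smul_mem_skewAdjoint hγ (IsSelfAdjoint.star_mul_self L₁₀) h₀₀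
  refine ⟨⟨star_one_add_smul_mul_one_add_smul_eq_one hγ h₁₁, hWco⟩,
    Complex.isSelfAdjoint_I_smul_iff_mem_skewAdjoint.2 hH₀_skew, ?_, ?_⟩
  · rw [mul_add, mul_one, mul_smul_comm]
    linear_combination (norm := module) h₀₁
  · rw [smul_smul, Complex.I_mul_I]
    module

/-- (Converse parametrization.)  If bounded operators
`L₀₀, L₀₁, L₁₀, L₁₁` satisfy the isometry relations `L_ij + L_ji† + γ L_1i† L_1j = 0`
and moreover `(1 + γL₁₁)(1 + γL₁₁)† = 1`, then `W := 1 + γL₁₁` is unitary,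
`H₀ := i(L₀₀ + (γ/2)L₁₀†L₁₀)` is self-adjoint, `L₀₁ = -L₁₀†W` and
`L₀₀ = -(γ/2)L₁₀†L₁₀ - iH₀`. -/
theorem isometry_relations_imply_HP_parametrization
    {H : Type*} [NormedAddCommGroup H] [InnerProductSpace ℂ H] [CompleteSpace H]
    (γ : ℝ) (hγ : 0 < γ)
    (L₀₀ L₀₁ L₁₀ L₁₁ : H →L[ℂ] H)
    (h₀₀ : L₀₀ + ContinuousLinearMap.adjoint L₀₀
        + (γ : ℂ) • (ContinuousLinearMap.adjoint L₁₀ * L₁₀) = 0)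
    (h₀₁ : L₀₁ + ContinuousLinearMap.adjoint L₁₀
        + (γ : ℂ) • (ContinuousLinearMap.adjoint L₁₀ * L₁₁) = 0)
    (h₁₀ : L₁₀ + ContinuousLinearMap.adjoint L₀₁
        + (γ : ℂ) • (ContinuousLinearMap.adjoint L₁₁ * L₁₀) = 0)
    (h₁₁ : L₁₁ + ContinuousLinearMap.adjoint L₁₁
        + (γ : ℂ) • (ContinuousLinearMap.adjoint L₁₁ * L₁₁) = 0)
    (W : H →L[ℂ] H) (hW : W = 1 + (γ : ℂ) • L₁₁)
    (hWco : W * ContinuousLinearMap.adjoint W = 1)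
    (H₀ : H →L[ℂ] H)
    (hH₀ : H₀ = Complex.I •
        (L₀₀ + ((γ : ℂ) / 2) • (ContinuousLinearMap.adjoint L₁₀ * L₁₀))) :
    (ContinuousLinearMap.adjoint W * W = 1 ∧ W * ContinuousLinearMap.adjoint W = 1) ∧
    ContinuousLinearMap.adjoint H₀ = H₀ ∧
    L₀₁ = -(ContinuousLinearMap.adjoint L₁₀ * W) ∧
    L₀₀ = -(((γ : ℂ) / 2) • (ContinuousLinearMap.adjoint L₁₀ * L₁₀))
        - Complex.I • H₀ :=
  isometry_relations_imply_HP_parametrization_general γ L₀₀ L₀₁ L₁₀ L₁₁ h₀₀ h₀₁ h₁₁ W hW hWco H₀ hH₀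
end

section
/- Let A be a unital C*-algebra over ℂ. Fix γ > 0, σ ∈ ℝ, κ := γ/2 + iσ, n ∈ ℝ, m, α ∈ ℂ, and C, F ∈ A with F self-adjoint. Define G := i·(F + conj(α)•C + α•C†) + κ•((n+1)•C†C + n•CC† + conj(m)•CC + m•C†C†) and, for X ∈ A, L(X) := γ•((n+1)•C†XC + n•CXC† + conj(m)•CXC + m•C†XC†) − X·G − G†·X, where X† := star X. Then for every X ∈ A, the dissipation satisfies L((star X)·X) − L(star X)·X − (star X)·L(X) = γ•((n+1)•[X,C]†[X,C] + n•[X,C†]†[X,C†] + conj(m)•[X,C†]†[X,C] + m•[X,C]†[X,C†]), where [X,Y] := X·Y − Y·X. -/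
/-!
Write `D_L(X) = L(X†X) - L(X†)X - X†L(X)`. For a generator `L(X) = Φ(X) - XG - G†X`
the `G`-terms contribute `X†(G + G†)X`, and `G + G† = Φ(1)` because the Hamiltonian part
of `G` is anti-self-adjoint while `κ + κ̄ = γ`. The quantity `D_Φ(X) + X†Φ(1)X` is linear in
`Φ`, and for a single sandwich `Φ(Y) = a†Yb` it equals `[X,a]†[X,b]`. The Gaussian jump
part is a combination of four sandwiches with `a, b ∈ {C, C†}`.
-/

open Complex

section Dissipation

variable {R A : Type*} [CommSemiring R] [Ring A] [StarRing A] [Algebra R A]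

def dissipation (L : A → A) (X : A) : A :=
  L (star X * X) - L (star X) * X - star X * L X

def sandwich (a b : A) : A → A := fun Y => star a * Y * b

theorem dissipation_lindblad {Φ : A → A} {G : A} (hG : G + star G = Φ 1) (X : A) :
    dissipation (fun Y => Φ Y - Y * G - star G * Y) X = dissipation Φ X + star X * Φ 1 * X := by
  rw [← hG]
  simp only [dissipation]
  noncomm_ring

variable (R) in
/-- The dissipation `D_L(X)` of every generator `L(X) = Φ(X) - XG - G†X` with `G + G† = Φ(1)`. -/
def jumpDissipation (X : A) : (A → A) →ₗ[R] A where
  toFun Φ := dissipation Φ X + star X * Φ 1 * X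
  map_add' Φ Ψ := by
    simp only [dissipation, Pi.add_apply, add_mul, mul_add]
    abel
  map_smul' c Φ := by
    simp only [dissipation, Pi.smul_apply, smul_mul_assoc, mul_smul_comm, smul_add, smul_sub,
      RingHom.id_apply]

theorem jumpDissipation_sandwich (a b X : A) :
    jumpDissipation R X (sandwich a b) = star (X * a - a * X) * (X * b - b * X) := by
  simp only [jumpDissipation, LinearMap.coe_mk, AddHom.coe_mk, dissipation, sandwich,
    star_sub, star_mul]
  noncomm_ring

end Dissipation

section Gaussian

variable {A : Type*} [Ring A] [StarRing A] [Module ℂ A] [StarModule ℂ A]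

theorem add_star_I_smul_add_smul {H K : A} (hH : IsSelfAdjoint H) (hK : IsSelfAdjoint K)
    (κ : ℂ) : (I • H + κ • K) + star (I • H + κ • K) = (κ + starRingEnd ℂ κ) • K := by
  simp only [star_add, star_smul, hH.star_eq, hK.star_eq, Complex.star_def, conj_I, neg_smul,
    add_smul]
  abel

end Gaussian

theorem gaussian_lindblad_generator_dissipation_general
    {A : Type*} [CStarAlgebra A]
    (γ σ : ℝ) (κ : ℂ) (hκ : κ = γ / 2 + Complex.I * σ)
    (n : ℝ) (m α : ℂ) (C F : A) (hF : star F = F)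
    (G : A)
    (hG : G = Complex.I • (F + (starRingEnd ℂ α) • C + α • star C)
        + κ • (((n : ℂ) + 1) • (star C * C) + (n : ℂ) • (C * star C)
            + (starRingEnd ℂ m) • (C * C) + m • (star C * star C)))
    (L : A → A)
    (hL : ∀ X : A, L X = (γ : ℂ) • (((n : ℂ) + 1) • (star C * X * C)
            + (n : ℂ) • (C * X * star C) + (starRingEnd ℂ m) • (C * X * C)
            + m • (star C * X * star C))
        - X * G - star G * X) :
    ∀ X : A,
      L (star X * X) - L (star X) * X - star X * L X
        = (γ : ℂ) • (((n : ℂ) + 1) • (star (X * C - C * X) * (X * C - C * X))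
            + (n : ℂ) • (star (X * star C - star C * X) * (X * star C - star C * X))
            + (starRingEnd ℂ m) • (star (X * star C - star C * X) * (X * C - C * X))
            + m • (star (X * C - C * X) * (X * star C - star C * X))) := by
  intro X
  set Φ : A → A := (γ : ℂ) • (((n : ℂ) + 1) • sandwich C C + (n : ℂ) • sandwich (star C) (star C)
    + (starRingEnd ℂ m) • sandwich (star C) C + m • sandwich C (star C))
  have hLΦ : L = fun Y => Φ Y - Y * G - star G * Y := by
    funext Y
    simp only [hL, Φ, sandwich, Pi.add_apply, Pi.smul_apply, star_star]
  have hH : IsSelfAdjoint (F + (starRingEnd ℂ α) • C + α • star C) := by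
    simp only [IsSelfAdjoint, star_add, star_smul, hF, star_star, Complex.star_def, conj_conj]
    abel
  have hK : IsSelfAdjoint (((n : ℂ) + 1) • (star C * C) + (n : ℂ) • (C * star C)
      + (starRingEnd ℂ m) • (C * C) + m • (star C * star C)) := by
    simp only [IsSelfAdjoint, star_add, star_smul, star_mul, star_star, Complex.star_def,
      map_one, conj_ofReal, conj_conj]
    abel
  have hGΦ : G + star G = Φ 1 := by
    rw [hG, add_star_I_smul_add_smul hH hK, hκ]
    simp only [Φ, sandwich, Pi.add_apply, Pi.smul_apply, star_star, mul_one, map_add,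
      map_mul, conj_I, conj_ofReal, map_div₀, map_ofNat]
    congr 1
    ring
  change dissipation L X = _
  rw [hLΦ, dissipation_lindblad hGΦ]
  change jumpDissipation ℂ X Φ = _
  simp only [Φ, map_add, map_smul, jumpDissipation_sandwich]

/-- (Paper, eqs. (27)–(28).)  The dissipation of the Gaussian
Lindblad-type generator `L` satisfies
`L(X†X) - L(X†)X - X†L(X) = γ((n+1)[X,C]†[X,C] + n[X,C†]†[X,C†] + m̄[X,C†]†[X,C] + m[X,C]†[X,C†])`,
where `[X,Y] := XY - YX`. -/
theorem gaussian_lindblad_generator_dissipation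
    {A : Type*} [CStarAlgebra A]
    (γ σ : ℝ) (hγ : 0 < γ) (κ : ℂ) (hκ : κ = γ / 2 + Complex.I * σ)
    (n : ℝ) (m α : ℂ) (C F : A) (hF : star F = F)
    (G : A)
    (hG : G = Complex.I • (F + (starRingEnd ℂ α) • C + α • star C)
        + κ • (((n : ℂ) + 1) • (star C * C) + (n : ℂ) • (C * star C)
            + (starRingEnd ℂ m) • (C * C) + m • (star C * star C)))
    (L : A → A)
    (hL : ∀ X : A, L X = (γ : ℂ) • (((n : ℂ) + 1) • (star C * X * C)
            + (n : ℂ) • (C * X * star C) + (starRingEnd ℂ m) • (C * X * C)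
            + m • (star C * X * star C))
        - X * G - star G * X) :
    ∀ X : A,
      L (star X * X) - L (star X) * X - star X * L X
        = (γ : ℂ) • (((n : ℂ) + 1) • (star (X * C - C * X) * (X * C - C * X))
            + (n : ℂ) • (star (X * star C - star C * X) * (X * star C - star C * X))
            + (starRingEnd ℂ m) • (star (X * star C - star C * X) * (X * C - C * X))
            + m • (star (X * C - C * X) * (X * star C - star C * X))) :=
  gaussian_lindblad_generator_dissipation_general γ σ κ hκ n m α C F hF G hG L hL
end

section
/- Let A be a unital C*-algebra over ℂ, let a, b ∈ A, let γ > 0, n ∈ ℝ with n ≥ 0, and m ∈ ℂ with |m|² ≤ n·(n+1). Then the element γ•((n+1)•(star a)·a + n•(star b)·b + conj(m)•(star b)·a + m•(star a)·b) is positive in A. -/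
/-!
Completing the square: for `α > 0`,
`α a†a + δ b†b + μ̄ b†a + μ a†b = α (a + (μ/α) b)† (a + (μ/α) b) + (δ - |μ|²/α) b†b`,
a sum of nonnegative multiples of elements of the form `x†x` once `|μ|² ≤ αδ`.
The theorem is the case `α = n + 1`, `δ = n`, scaled by `γ ≥ 0`.
-/

open ComplexOrder

section

variable {A : Type*} [NonUnitalRing A] [StarRing A] [Module ℂ A] [StarModule ℂ A]
  [IsScalarTower ℂ A A] [SMulCommClass ℂ A A]

def binaryHermitianForm (α δ : ℝ) (μ : ℂ) (a b : A) : A :=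
  (α : ℂ) • (star a * a) + (δ : ℂ) • (star b * b) + starRingEnd ℂ μ • (star b * a)
    + μ • (star a * b)

theorem binaryHermitianForm_eq_add_smul_star_mul_self {α : ℝ} (hα : α ≠ 0) (δ : ℝ) (μ : ℂ)
    (a b : A) :
    binaryHermitianForm α δ μ a b =
      (α : ℂ) • (star (a + (μ / α) • b) * (a + (μ / α) • b))
        + ((δ - ‖μ‖ ^ 2 / α : ℝ) : ℂ) • (star b * b) := by
  have hμ : ((‖μ‖ ^ 2 : ℝ) : ℂ) = starRingEnd ℂ μ * μ := by
    rw [mul_comm, Complex.mul_conj']; norm_cast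
  simp only [binaryHermitianForm, star_add, star_smul, add_mul, mul_add, smul_mul_assoc,
    mul_smul_comm, smul_add, smul_smul, RCLike.star_def, map_div₀, Complex.conj_ofReal,
    Complex.ofReal_sub, Complex.ofReal_div, hμ]
  match_scalars <;> field_simp
  ring

variable [PartialOrder A] [StarOrderedRing A]

theorem binaryHermitianForm_nonneg {α δ : ℝ} (hα : 0 < α) {μ : ℂ} (hμ : ‖μ‖ ^ 2 ≤ α * δ)
    (a b : A) : 0 ≤ binaryHermitianForm α δ μ a b := by
  have hδ : 0 ≤ δ - ‖μ‖ ^ 2 / α := by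
    rw [sub_nonneg, div_le_iff₀ hα]; linarith
  rw [binaryHermitianForm_eq_add_smul_star_mul_self hα.ne']
  exact add_nonneg (smul_nonneg (Complex.zero_le_real.mpr hα.le) (star_mul_self_nonneg _))
    (smul_nonneg (Complex.zero_le_real.mpr hδ) (star_mul_self_nonneg _))

end

/-- In a unital C*-algebra, for `γ > 0`, `n ≥ 0` and `|m|² ≤ n(n+1)`,
the Gaussian quadratic form `γ((n+1)a†a + nb†b + m̄b†a + ma†b)` is positive. -/
theorem gaussian_quadratic_form_positive
    {A : Type*} [CStarAlgebra A] [PartialOrder A] [StarOrderedRing A]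
    (a b : A) (γ : ℝ) (hγ : 0 < γ) (n : ℝ) (hn : 0 ≤ n)
    (m : ℂ) (hm : ‖m‖ ^ 2 ≤ n * (n + 1)) :
    0 ≤ (γ : ℂ) • (((n : ℂ) + 1) • (star a * a) + (n : ℂ) • (star b * b)
        + (starRingEnd ℂ m) • (star b * a) + m • (star a * b)) := by
  have hform := binaryHermitianForm_nonneg (by linarith : (0 : ℝ) < n + 1)
    (by linarith : ‖m‖ ^ 2 ≤ (n + 1) * n) a b
  rw [binaryHermitianForm, Complex.ofReal_add, Complex.ofReal_one] at hform
  exact smul_nonneg (Complex.zero_le_real.mpr hγ.le) hform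
end
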